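/- Let C = (c_{ij}) be a 2×2 complex matrix; let P₁₁ (m₁×m₁), P₂₂ (m₂×m₂), P₂₁ (m₂×m₁) be complex matrices whose row sums all equal 1, and let P₁₂ = e_{m₁}·vᵀ where v ∈ ℂ^{m₂} satisfies vᵀe_{m₂} = 1. Let A be the block matrix [[c₁₁P₁₁, c₁₂P₁₂], [c₂₁P₂₁, c₂₂P₂₂]]. Then the characteristic polynomial of A factors as p_A(λ) = [(c₁₁−λ)(c₂₂−λ) − c₁₂c₂₁] · det(c₁₁P₁₁ − λI)/(c₁₁−λ) · det(c₂₂P₂₂ − λI)/(c₂₂−λ); equivalently, the multiset of eigenvalues of A equals the eigenvalues of C together with the eigenvalues of c₁₁P₁₁ other than one copy of c₁₁ and the eigenvalues of c₂₂P₂₂ other than one copy of c₂₂. -/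

import Mathlib

/-!
Conjugating by the unipotent matrix `onesShear n`, which sends `e₀` to the all-ones vector, turns a
block with constant row sums `c` into one whose column `0` is `c • e₀`, and the rank-one block
`e vᵀ` into `e₀ v'ᵀ` with `v' 0 = ∑ v`. Listing the two coordinates `0` of the conjugated block
matrix first makes it block upper triangular, with diagonal blocks `C` and a block lower triangular
matrix whose diagonal blocks are the tails `Tᵢ` (row and column `0` removed) of the conjugated
`cᵢᵢ Pᵢᵢ`. Hence `charpoly A = charpoly C · charpoly T₁ · charpoly T₂`, while expanding along
column `0` gives `charpoly (cᵢᵢ Pᵢᵢ) = (X - cᵢᵢ) · charpoly Tᵢ`.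
-/

open Polynomial

namespace Matrix

variable {R : Type*} [CommRing R]

def onesShear (n : ℕ) : Matrix (Fin (n + 1)) (Fin (n + 1)) R :=
  1 + vecMulVec (1 - Pi.single 0 1) (Pi.single 0 1)

def onesShearInv (n : ℕ) : Matrix (Fin (n + 1)) (Fin (n + 1)) R :=
  1 - vecMulVec (1 - Pi.single 0 1) (Pi.single 0 1)

lemma onesShear_mul_onesShearInv (n : ℕ) :
    onesShear n * onesShearInv n = (1 : Matrix (Fin (n + 1)) _ R) := by
  rw [onesShear, onesShearInv, mul_sub, add_mul, add_mul, vecMulVec_mul_vecMulVec]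
  simp

lemma onesShear_mulVec_single (n : ℕ) :
    onesShear n *ᵥ Pi.single 0 1 = (1 : Fin (n + 1) → R) := by
  ext i
  cases i using Fin.cases <;> simp [onesShear, vecMulVec_apply]

lemma onesShearInv_mulVec_one (n : ℕ) :
    onesShearInv n *ᵥ 1 = (Pi.single 0 1 : Fin (n + 1) → R) := by
  simp [onesShearInv, sub_mulVec, vecMulVec_mulVec]

lemma vecMul_onesShear_zero {n : ℕ} (w : Fin (n + 1) → R) :
    (w ᵥ* onesShear n) 0 = ∑ j, w j := by
  simp [onesShear, vecMul_add, vecMul_vecMulVec, dotProduct, mul_sub, Finset.sum_sub_distrib,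
    Pi.single_apply]

lemma charpoly_conj_of_mul_eq_one {n : Type*} [Fintype n] [DecidableEq n] {U V : Matrix n n R}
    (h : U * V = 1) (A : Matrix n n R) : (V * A * U).charpoly = A.charpoly := by
  rw [charpoly_mul_comm, ← Matrix.mul_assoc, h, Matrix.one_mul]

def shearConj {m n : ℕ} (A : Matrix (Fin (m + 1)) (Fin (n + 1)) R) :
    Matrix (Fin (m + 1)) (Fin (n + 1)) R :=
  onesShearInv (R := R) m * A * onesShear (R := R) n

lemma charpoly_shearConj {n : ℕ} (A : Matrix (Fin (n + 1)) (Fin (n + 1)) R) :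
    (shearConj A).charpoly = A.charpoly :=
  charpoly_conj_of_mul_eq_one (onesShear_mul_onesShearInv n) A

lemma charpoly_fromBlocks_shearConj {m n : ℕ} (A₁₁ : Matrix (Fin (m + 1)) (Fin (m + 1)) R)
    (A₁₂ : Matrix (Fin (m + 1)) (Fin (n + 1)) R) (A₂₁ : Matrix (Fin (n + 1)) (Fin (m + 1)) R)
    (A₂₂ : Matrix (Fin (n + 1)) (Fin (n + 1)) R) :
    (fromBlocks (shearConj A₁₁) (shearConj A₁₂) (shearConj A₂₁) (shearConj A₂₂)).charpoly =
      (fromBlocks A₁₁ A₁₂ A₂₁ A₂₂).charpoly := by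
  have h : fromBlocks (onesShear m) 0 0 (onesShear n) *
      fromBlocks (onesShearInv m) 0 0 (onesShearInv n) = (1 : Matrix _ _ R) := by
    simp [fromBlocks_multiply, onesShear_mul_onesShearInv]
  rw [← charpoly_conj_of_mul_eq_one h (fromBlocks A₁₁ A₁₂ A₂₁ A₂₂)]
  simp [fromBlocks_multiply, shearConj]

lemma shearConj_col_zero {m n : ℕ} {A : Matrix (Fin (m + 1)) (Fin (n + 1)) R} {c : R}
    (h : A *ᵥ 1 = c • 1) : (shearConj A).col 0 = Pi.single 0 c := by
  rw [← mulVec_single_one, shearConj, ← mulVec_mulVec, onesShear_mulVec_single, ← mulVec_mulVec,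
    h, mulVec_smul, onesShearInv_mulVec_one, ← Pi.single_smul', smul_eq_mul, mul_one]

lemma shearConj_vecMulVec_one {m n : ℕ} (w : Fin (n + 1) → R) :
    shearConj (vecMulVec 1 w : Matrix (Fin (m + 1)) _ R) =
      vecMulVec (Pi.single 0 1) (w ᵥ* onesShear n) := by
  rw [shearConj, mul_vecMulVec, vecMulVec_mul, onesShearInv_mulVec_one]

lemma charpoly_eq_X_sub_C_mul_of_col_zero {n : ℕ} {M : Matrix (Fin (n + 1)) (Fin (n + 1)) R}
    {c : R} (h : M.col 0 = Pi.single 0 c) :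
    M.charpoly = (X - C c) * (M.submatrix Fin.succ Fin.succ).charpoly := by
  have hcol (i : Fin (n + 1)) : M i 0 = (Pi.single 0 c : Fin (n + 1) → R) i := congrFun h i
  have htail : charmatrix (M.submatrix Fin.succ Fin.succ) =
      (charmatrix M).submatrix Fin.succ Fin.succ := by
    ext i j
    simp [charmatrix_apply, diagonal_apply]
  rw [charpoly, det_succ_column_zero, Fin.sum_univ_succ, charpoly, htail]
  simp [hcol, Fin.succ_ne_zero]

def headTailEquiv (m n : ℕ) : Fin 2 ⊕ (Fin m ⊕ Fin n) ≃ Fin (m + 1) ⊕ Fin (n + 1) where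
  toFun
    | .inl i => ![.inl 0, .inr 0] i
    | .inr (.inl i) => .inl i.succ
    | .inr (.inr i) => .inr i.succ
  invFun
    | .inl i => Fin.cases (.inl 0) (fun i => .inr (.inl i)) i
    | .inr i => Fin.cases (.inl 1) (fun i => .inr (.inr i)) i
  left_inv := by
    rintro (i | i | i)
    · fin_cases i <;> rfl
    all_goals rfl
  right_inv := by
    rintro (i | i) <;> cases i using Fin.cases <;> simp

theorem charpoly_fromBlocks_eq_of_col_zero {m n : ℕ} (K : Matrix (Fin 2) (Fin 2) R)
    {M₁₁ : Matrix (Fin (m + 1)) (Fin (m + 1)) R} {M₁₂ : Matrix (Fin (m + 1)) (Fin (n + 1)) R}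
    {M₂₁ : Matrix (Fin (n + 1)) (Fin (m + 1)) R} {M₂₂ : Matrix (Fin (n + 1)) (Fin (n + 1)) R}
    {w : Fin (n + 1) → R} (h₁₁ : M₁₁.col 0 = Pi.single 0 (K 0 0))
    (h₁₂ : M₁₂ = vecMulVec (Pi.single 0 1) w) (hw : w 0 = K 0 1)
    (h₂₁ : M₂₁.col 0 = Pi.single 0 (K 1 0)) (h₂₂ : M₂₂.col 0 = Pi.single 0 (K 1 1)) :
    (fromBlocks M₁₁ M₁₂ M₂₁ M₂₂).charpoly =
      K.charpoly * (M₁₁.submatrix Fin.succ Fin.succ).charpoly *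
        (M₂₂.submatrix Fin.succ Fin.succ).charpoly := by
  set e := headTailEquiv m n
  set M := fromBlocks M₁₁ M₁₂ M₂₁ M₂₂
  have hM : M.submatrix e e = fromBlocks K (M.submatrix e e).toBlocks₁₂ 0
      (fromBlocks (M₁₁.submatrix Fin.succ Fin.succ) 0 (M₂₁.submatrix Fin.succ Fin.succ)
        (M₂₂.submatrix Fin.succ Fin.succ)) := by
    subst h₁₂
    have h₁₁' := congrFun h₁₁
    have h₂₁' := congrFun h₂₁
    have h₂₂' := congrFun h₂₂
    simp only [col_apply] at h₁₁' h₂₁' h₂₂'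
    ext ((i | i | i)) ((j | j | j))
    any_goals rfl
    all_goals (try fin_cases i) <;> (try fin_cases j) <;>
      simp [M, e, headTailEquiv, vecMulVec_apply, h₁₁', h₂₁', h₂₂', hw]
  rw [← charpoly_reindex e.symm, reindex_apply, e.symm_symm, hM, charpoly_fromBlocks_zero₂₁,
    charpoly_fromBlocks_zero₁₂, mul_assoc]

theorem charpoly_fromBlocks_vecMulVec_mul_eq {m n : ℕ} (K : Matrix (Fin 2) (Fin 2) R)
    {A₁₁ : Matrix (Fin (m + 1)) (Fin (m + 1)) R} {A₂₁ : Matrix (Fin (n + 1)) (Fin (m + 1)) R}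
    {A₂₂ : Matrix (Fin (n + 1)) (Fin (n + 1)) R} {w : Fin (n + 1) → R}
    (h₁₁ : A₁₁ *ᵥ 1 = K 0 0 • 1) (hw : ∑ j, w j = K 0 1)
    (h₂₁ : A₂₁ *ᵥ 1 = K 1 0 • 1) (h₂₂ : A₂₂ *ᵥ 1 = K 1 1 • 1) :
    (fromBlocks A₁₁ (vecMulVec 1 w) A₂₁ A₂₂).charpoly * ((X - C (K 0 0)) * (X - C (K 1 1))) =
      K.charpoly * A₁₁.charpoly * A₂₂.charpoly := by
  rw [← charpoly_fromBlocks_shearConj, ← charpoly_shearConj A₁₁, ← charpoly_shearConj A₂₂,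
    charpoly_fromBlocks_eq_of_col_zero K (shearConj_col_zero h₁₁) (shearConj_vecMulVec_one w)
      (by rw [vecMul_onesShear_zero, hw]) (shearConj_col_zero h₂₁) (shearConj_col_zero h₂₂),
    charpoly_eq_X_sub_C_mul_of_col_zero (shearConj_col_zero h₁₁),
    charpoly_eq_X_sub_C_mul_of_col_zero (shearConj_col_zero h₂₂)]
  ring

lemma smul_mulVec_one_of_sum_eq_one {m n : Type*} [Fintype n] {P : Matrix m n R}
    (h : ∀ i, ∑ j, P i j = 1) (c : R) : (c • P) *ᵥ 1 = c • 1 := by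
  ext i
  simp [mulVec, dotProduct, ← Finset.mul_sum, h]

end Matrix

/-- For the block matrix `A = [[c₁₁P₁₁, c₁₂ e vᵀ], [c₂₁P₂₁, c₂₂P₂₂]]` with each `Pᵢⱼ`
having all row sums `1` (and `vᵀ e = 1`), the characteristic polynomial of `A`
factors as `charpoly(A) · (X - c₁₁)(X - c₂₂) = charpoly(C) · charpoly(c₁₁P₁₁) ·
charpoly(c₂₂P₂₂)`; i.e. the eigenvalues of `A` are those of `C` together with those
of `c₁₁P₁₁` minus one copy of `c₁₁` and those of `c₂₂P₂₂` minus one copy of `c₂₂`. -/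
theorem stmt_13 {m₁ m₂ : ℕ} (Cm : Matrix (Fin 2) (Fin 2) ℂ)
    (P11 : Matrix (Fin m₁) (Fin m₁) ℂ) (P22 : Matrix (Fin m₂) (Fin m₂) ℂ)
    (P21 : Matrix (Fin m₂) (Fin m₁) ℂ) (v : Fin m₂ → ℂ)
    (h11 : ∀ i, ∑ j, P11 i j = 1)
    (h22 : ∀ i, ∑ j, P22 i j = 1)
    (h21 : ∀ i, ∑ j, P21 i j = 1)
    (hv : ∑ j, v j = 1) :
    (Matrix.fromBlocks (Cm 0 0 • P11)
        (Cm 0 1 • Matrix.vecMulVec (fun _ => (1 : ℂ)) v)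
        (Cm 1 0 • P21) (Cm 1 1 • P22)).charpoly *
      ((X - C (Cm 0 0)) * (X - C (Cm 1 1))) =
    Cm.charpoly * (Cm 0 0 • P11).charpoly * (Cm 1 1 • P22).charpoly := by
  obtain ⟨n₂, rfl⟩ : ∃ n, m₂ = n + 1 :=
    Nat.exists_eq_add_one.mpr (Nat.pos_of_ne_zero (by rintro rfl; simp at hv))
  obtain ⟨n₁, rfl⟩ : ∃ n, m₁ = n + 1 :=
    Nat.exists_eq_add_one.mpr (Nat.pos_of_ne_zero (by rintro rfl; simpa using h21 0))
  rw [← Matrix.vecMulVec_smul]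
  exact Matrix.charpoly_fromBlocks_vecMulVec_mul_eq Cm
    (Matrix.smul_mulVec_one_of_sum_eq_one h11 _) (by simp [← Finset.mul_sum, hv])
    (Matrix.smul_mulVec_one_of_sum_eq_one h21 _) (Matrix.smul_mulVec_one_of_sum_eq_one h22 _)
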